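/- arXiv:2008.04668 — 3 statements merged into one kernel-verified Lean document; each statement's English description precedes it below -/
import Mathlib

section
/- Let 𝒢 be an ultragraph without sinks. The ultragraph groupoid 𝔊_𝒢 is strongly ℤ-graded (that is, (𝔊_𝒢)_m (𝔊_𝒢)_n = (𝔊_𝒢)_{m+n} for all m, n ∈ ℤ) if and only if the following two conditions hold: (1) 𝒢 has no infinite emitters (no vertex v with s⁻¹(v) infinite); and (2) for every k ∈ ℕ and every infinite path p ∈ 𝔭^∞, there exist an initial subpath x of p and a finite path y ∈ 𝒢* such that r(x) = r(y) and |y| − |x| = k. -/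
set_option synthInstance.maxHeartbeats 1000000
set_option maxHeartbeats 1000000

noncomputable section
open Classical TensorProduct

/-- An ultragraph: countable sets of vertices and edges (countability is imposed in the
theorems), a source map and a range map taking nonempty sets of vertices. -/
structure Ultragraph (V E : Type) where
  s : E → V
  r : E → Set V
  r_nonempty : ∀ e, (r e).Nonempty

namespace Ultragraph

variable {V E : Type}

/-- Membership in `𝒢⁰`: the smallest collection of subsets of `G⁰` containing the
singletons and the ranges of edges, closed under finite unions and intersections. -/
inductive IsG0 (U : Ultragraph V E) : Set V → Prop
  | vertex (v : V) : IsG0 U {v}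
  | range (e : E) : IsG0 U (U.r e)
  | union {A B : Set V} : IsG0 U A → IsG0 U B → IsG0 U (A ∪ B)
  | inter {A B : Set V} : IsG0 U A → IsG0 U B → IsG0 U (A ∩ B)

variable (U : Ultragraph V E)

/-- No sinks: every vertex emits at least one edge. -/
def HasNoSinks : Prop := ∀ v : V, ∃ e : E, U.s e = v

/-- No vertex is an infinite emitter. -/
def NoInfiniteEmitters : Prop := ∀ v : V, {e : E | U.s e = v}.Finite

/-- A regular vertex: `0 < |s⁻¹(v)| < ∞`. -/
def IsRegular (v : V) : Prop := {e : E | U.s e = v}.Nonempty ∧ {e : E | U.s e = v}.Finite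

/-- Two edges are composable when the source of the second lies in the range of the first. -/
def Adj (e f : E) : Prop := U.s f ∈ U.r e

/-- A (possibly empty) compatible list of edges. -/
def IsEdgePath (l : List E) : Prop := List.Chain' U.Adj l

/-- Range of a list of edges: the range of its last edge (junk value `∅` on `[]`). -/
def rList (l : List E) : Set V :=
  match l.getLast? with
  | some e => U.r e
  | none => ∅

/-- A finite path in `𝒢*`: either an element of `𝒢⁰` (length `0`) or a nonempty
compatible list of edges. -/
def IsFPath : Set V ⊕ List E → Prop
  | Sum.inl A => U.IsG0 A
  | Sum.inr l => l ≠ [] ∧ U.IsEdgePath l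

/-- Range of a finite path. -/
def rF : Set V ⊕ List E → Set V
  | Sum.inl A => A
  | Sum.inr l => U.rList l

/-- "The source of the finite path `α` is the vertex `v`". -/
def sFMatch : Set V ⊕ List E → V → Prop
  | Sum.inl A, v => A = ({v} : Set V)
  | Sum.inr l, v => ∃ e, l.head? = some e ∧ U.s e = v

/-- A cycle: a nonempty path whose source vertex belongs to its range. -/
def IsCycle (c : List E) : Prop :=
  c ≠ [] ∧ U.IsEdgePath c ∧ ∃ e, c.head? = some e ∧ U.s e ∈ U.rList c

/-- A first-return path based at `v`. -/
def IsFirstReturn (v : V) (c : List E) : Prop :=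
  c ≠ [] ∧ U.IsEdgePath c ∧ (∃ e, c.head? = some e ∧ U.s e = v) ∧ v ∈ U.rList c ∧
    ∀ (i : ℕ) (h : i < c.length), 0 < i → U.s (c.get ⟨i, h⟩) ≠ v

/-- Condition (K). -/
def ConditionK : Prop :=
  ∀ v : V, (∀ c : List E, ¬ U.IsFirstReturn v c) ∨
    ∃ c₁ c₂ : List E, U.IsFirstReturn v c₁ ∧ U.IsFirstReturn v c₂ ∧ c₁ ≠ c₂

/-- `w ≥ v`: there is a finite path with source `w` whose range contains `v`. -/
def VGe (w v : V) : Prop := ∃ α : Set V ⊕ List E, U.IsFPath α ∧ U.sFMatch α w ∧ v ∈ U.rF α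

/-- An ultrapath, given as raw data `(α, A)` (a list of edges and a range set):
the list is compatible, `A ∈ 𝒢⁰` and `A ⊆ r(α)` when `α` is nonempty.
Length-zero ultrapaths `( [], A )` are the elements `A ∈ 𝒢⁰`. -/
def IsUPath (x : List E × Set V) : Prop :=
  U.IsEdgePath x.1 ∧ U.IsG0 x.2 ∧ ∀ e, x.1.getLast? = some e → x.2 ⊆ U.r e

/-- The "source" of an ultrapath, as a set: the singleton on the source of its first edge,
or the set itself in length zero. -/
def srcSet (x : List E × Set V) : Set V :=
  match x.1.head? with
  | some e => {U.s e}
  | none => x.2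

/-- The concatenation `x · y` is defined. -/
def CanConcatU (x y : List E × Set V) : Prop := (x.2 ∩ U.srcSet y).Nonempty

/-- An infinite path. -/
def IsIPath (p : ℕ → E) : Prop := ∀ n : ℕ, U.s (p (n + 1)) ∈ U.r (p n)

/-- The principal filter of `A` in the meet-semilattice `𝒢⁰`. -/
def principalFilter (A : Set V) : Set (Set V) := {B | U.IsG0 B ∧ A ⊆ B}

/-- A filter in `𝒢⁰`. -/
def IsFilterG0 (F : Set (Set V)) : Prop :=
  (∀ B ∈ F, U.IsG0 B) ∧ (∅ : Set V) ∉ F ∧ (∀ A ∈ F, ∀ B ∈ F, A ∩ B ∈ F) ∧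
    ∀ A ∈ F, ∀ B : Set V, U.IsG0 B → A ⊆ B → B ∈ F

/-- An ultraset: an element of `𝒢⁰` whose principal filter is an ultrafilter in `𝒢⁰`. -/
def IsUltraset (A : Set V) : Prop :=
  U.IsG0 A ∧ U.IsFilterG0 (U.principalFilter A) ∧
    ∀ F : Set (Set V), U.IsFilterG0 F → U.principalFilter A ⊆ F → F = U.principalFilter A

/-- `A` is an infinite emitter (as a set). -/
def InfEmitterSet (A : Set V) : Prop := {e : E | U.s e ∈ A}.Infinite

end Ultragraph

/-- Concatenation of ultrapaths (raw operation). -/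
def concatU {V E : Type} (x y : List E × Set V) : List E × Set V :=
  (x.1 ++ y.1, if y.1 = [] then x.2 ∩ y.2 else y.2)

/-- Prepend a finite list of edges to an infinite path. -/
def prependL {E : Type} (l : List E) (p : ℕ → E) : ℕ → E :=
  fun n => if h : n < l.length then l.get ⟨n, h⟩ else p (n - l.length)

/-- The periodic infinite path `ccc⋯` determined by a nonempty list `c`. -/
def periodicL {E : Type} (c : List E) (hc : c ≠ []) : ℕ → E :=
  fun n => c.get ⟨n % c.length, Nat.mod_lt n (List.length_pos_iff.mpr hc)⟩

/-- Shift of an infinite path: `τ_{>m}`. -/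
def shiftL {E : Type} (m : ℕ) (p : ℕ → E) : ℕ → E := fun n => p (n + m)

/-- Tail-equivalence of infinite paths. -/
def IPEquiv {E : Type} (p q : ℕ → E) : Prop := ∃ m n : ℕ, shiftL m p = shiftL n q

namespace Ultragraph

variable {V E : Type} (U : Ultragraph V E)

/-- Elements of `X_𝒢 = Y_∞ ∪ 𝔭^∞` (raw data): a finite ultrapath or an infinite path. -/
abbrev XType (V E : Type) : Type := (List E × Set V) ⊕ (ℕ → E)

/-- Concatenation of an ultrapath with an element of `X_𝒢` (raw operation). -/
def concatXel (x : List E × Set V) : XType V E → XType V E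
  | Sum.inl y => Sum.inl (concatU x y)
  | Sum.inr p => Sum.inr (prependL x.1 p)

/-- Membership in `X_𝒢`. -/
def IsXEl : XType V E → Prop
  | Sum.inl y => U.IsUPath y ∧ U.IsUltraset y.2 ∧ U.InfEmitterSet y.2
  | Sum.inr p => U.IsIPath p

/-- The concatenation `x · μ` is defined. -/
def CanConcatX (x : List E × Set V) : XType V E → Prop
  | Sum.inl y => U.CanConcatU x y
  | Sum.inr p => U.s (p 0) ∈ x.2

/-- Raw triples, of which the ultragraph groupoid consists. -/
abbrev Trip (V E : Type) : Type := XType V E × ℤ × XType V E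

/-- Membership in the ultragraph groupoid
`𝔊_𝒢 = {(x·μ, |x|−|y|, y·μ) : x, y ∈ 𝔭, μ ∈ X_𝒢, r(x) = r(y), x·μ, y·μ ∈ X_𝒢}`. -/
def InGrpd (g : Trip V E) : Prop :=
  ∃ (x y : List E × Set V) (μ : XType V E),
    U.IsUPath x ∧ U.IsUPath y ∧ U.IsXEl μ ∧ x.2 = y.2 ∧
    U.CanConcatX x μ ∧ U.CanConcatX y μ ∧
    U.IsXEl (concatXel x μ) ∧ U.IsXEl (concatXel y μ) ∧
    g = (concatXel x μ, (x.1.length : ℤ) - (y.1.length : ℤ), concatXel y μ)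

end Ultragraph

/-- Composition in the ultragraph groupoid: `(u,k,v)(v,l,w) = (u,k+l,w)` (raw operation). -/
def compT {V E : Type} (a b : Ultragraph.Trip V E) : Ultragraph.Trip V E :=
  (a.1, a.2.1 + b.2.1, b.2.2)

namespace Ultragraph

variable {V E : Type} (U : Ultragraph V E)

/-- The degree-`n` component `(𝔊_𝒢)_n` of the ℤ-graded ultragraph groupoid. -/
def gradeSet (n : ℤ) : Set (Trip V E) := {g | U.InGrpd g ∧ g.2.1 = n}

/-- Product of two subsets of the groupoid: `ST = {ab : a ∈ S, b ∈ T composable}`. -/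
def setMulG (S T : Set (Trip V E)) : Set (Trip V E) :=
  {c | ∃ a ∈ S, ∃ b ∈ T, a.2.2 = b.1 ∧ c = compT a b}

/-- The carrier of the ultragraph groupoid `𝔊_𝒢`. -/
def Grpd : Type := {g : Trip V E // U.InGrpd g}

/-- The set `𝒜(x,y)`. -/
def ASetRaw (x y : List E × Set V) : Set (Trip V E) :=
  {g | ∃ μ : XType V E, U.IsXEl μ ∧ U.CanConcatX x μ ∧ U.CanConcatX y μ ∧
      U.IsXEl (concatXel x μ) ∧ U.IsXEl (concatXel y μ) ∧
      g = (concatXel x μ, (x.1.length : ℤ) - (y.1.length : ℤ), concatXel y μ)}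

/-- The set `𝒜(x,y)` inside the groupoid. -/
def ASet (x y : List E × Set V) : Set U.Grpd := {g | g.1 ∈ U.ASetRaw x y}

/-- The basic set `𝒜(x,y,K,Q)`. -/
def ABasic (x y : List E × Set V) (Ke : Set E) (Q : Set (Set V)) : Set U.Grpd :=
  U.ASet x y \
    ((⋃ e ∈ Ke, U.ASet (concatU x ([e], U.r e)) (concatU y ([e], U.r e))) ∪
      ⋃ C ∈ Q, U.ASet (concatU x (([] : List E), C)) (concatU y (([] : List E), C)))

/-- The collection of all basic open sets `𝒜(x,y,K,Q)`. -/
def BasicSets : Set (Set U.Grpd) :=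
  {S | ∃ (x y : List E × Set V) (Ke : Set E) (Q : Set (Set V)),
      U.IsUPath x ∧ U.IsUPath y ∧ x.2 = y.2 ∧
      (∀ e ∈ Ke, U.s e ∈ x.2) ∧ Ke.Finite ∧ (∀ C ∈ Q, U.IsG0 C) ∧ Q.Finite ∧
      S = U.ABasic x y Ke Q}

/-- The topology of the ultragraph groupoid, generated by the sets `𝒜(x,y,K,Q)`. -/
instance : TopologicalSpace U.Grpd := TopologicalSpace.generateFrom U.BasicSets

/-- The unit space `𝔊_𝒢⁽⁰⁾ = {(μ,0,μ) : μ ∈ X_𝒢}` inside the groupoid. -/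
def unitSpaceSet : Set U.Grpd := {g | g.1.2.1 = 0 ∧ g.1.1 = g.1.2.2}

end Ultragraph

/-- The source unit `s(u,k,v) = (v,0,v)` of a raw triple. -/
def srcT {V E : Type} (g : Ultragraph.Trip V E) : Ultragraph.Trip V E := (g.2.2, 0, g.2.2)

/-- The range unit `r(u,k,v) = (u,0,u)` of a raw triple. -/
def rngT {V E : Type} (g : Ultragraph.Trip V E) : Ultragraph.Trip V E := (g.1, 0, g.1)

namespace Ultragraph

variable {V E : Type} (U : Ultragraph V E)

/-- A subset `D` of the unit space is invariant if `s(γ) ∈ D` implies `r(γ) ∈ D`. -/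
def InvariantSet (D : Set U.Grpd) : Prop :=
  ∀ g : U.Grpd, ∀ (h1 : U.InGrpd (srcT g.1)) (h2 : U.InGrpd (rngT g.1)),
    (⟨srcT g.1, h1⟩ : U.Grpd) ∈ D → (⟨rngT g.1, h2⟩ : U.Grpd) ∈ D

/-- The source of `g` lies in `D`. -/
def SrcInD (D : Set U.Grpd) (g : U.Grpd) : Prop :=
  ∃ h : U.InGrpd (srcT g.1), (⟨srcT g.1, h⟩ : U.Grpd) ∈ D

/-- The range of `g` lies in `D`. -/
def RngInD (D : Set U.Grpd) (g : U.Grpd) : Prop :=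
  ∃ h : U.InGrpd (rngT g.1), (⟨rngT g.1, h⟩ : U.Grpd) ∈ D

/-- The restriction `𝔊_𝒢|_D` of the groupoid to a subset `D` of the unit space. -/
def RestrSet (D : Set U.Grpd) : Set U.Grpd := {g | U.SrcInD D g ∧ U.RngInD D g}

/-- The ultragraph groupoid is minimal: the unit space has no nontrivial open
invariant subsets. -/
def IsMinimalGrpd : Prop :=
  ∀ D : Set U.Grpd, D ⊆ U.unitSpaceSet →
    IsOpen {u : U.unitSpaceSet | (u : U.Grpd) ∈ D} → U.InvariantSet D →
      D = ∅ ∨ D = U.unitSpaceSet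

end Ultragraph


namespace Ultragraph

variable {V E : Type}

/-- Generators of the ultragraph Leavitt path algebra: `p_A` (`A ∈ 𝒢⁰`), `s_e`, `s*_e`. -/
inductive LGen (U : Ultragraph V E) : Type
  | pr : {A : Set V // U.IsG0 A} → LGen U
  | ed : E → LGen U
  | st : E → LGen U

variable (K : Type) [Field K] (U : Ultragraph V E)

/-- The defining relations of the ultragraph Leavitt path algebra. -/
inductive LRel : FreeAlgebra K (LGen U) → FreeAlgebra K (LGen U) → Prop
  | pEmpty (h : U.IsG0 (∅ : Set V)) :
      LRel (FreeAlgebra.ι K (LGen.pr ⟨∅, h⟩)) 0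
  | pInter (A B : {A : Set V // U.IsG0 A}) :
      LRel (FreeAlgebra.ι K (LGen.pr A) * FreeAlgebra.ι K (LGen.pr B))
        (FreeAlgebra.ι K (LGen.pr ⟨A.1 ∩ B.1, IsG0.inter A.2 B.2⟩))
  | pUnion (A B : {A : Set V // U.IsG0 A}) :
      LRel (FreeAlgebra.ι K (LGen.pr ⟨A.1 ∪ B.1, IsG0.union A.2 B.2⟩))
        (FreeAlgebra.ι K (LGen.pr A) + FreeAlgebra.ι K (LGen.pr B) -
          FreeAlgebra.ι K (LGen.pr ⟨A.1 ∩ B.1, IsG0.inter A.2 B.2⟩))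
  | sLeft (e : E) :
      LRel (FreeAlgebra.ι K (LGen.pr ⟨{U.s e}, IsG0.vertex (U.s e)⟩) * FreeAlgebra.ι K (LGen.ed e))
        (FreeAlgebra.ι K (LGen.ed e))
  | sRight (e : E) :
      LRel (FreeAlgebra.ι K (LGen.ed e) * FreeAlgebra.ι K (LGen.pr ⟨U.r e, IsG0.range e⟩))
        (FreeAlgebra.ι K (LGen.ed e))
  | stLeft (e : E) :
      LRel (FreeAlgebra.ι K (LGen.pr ⟨U.r e, IsG0.range e⟩) * FreeAlgebra.ι K (LGen.st e))
        (FreeAlgebra.ι K (LGen.st e))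
  | stRight (e : E) :
      LRel (FreeAlgebra.ι K (LGen.st e) * FreeAlgebra.ι K (LGen.pr ⟨{U.s e}, IsG0.vertex (U.s e)⟩))
        (FreeAlgebra.ι K (LGen.st e))
  | ortho (e f : E) (h : e ≠ f) :
      LRel (FreeAlgebra.ι K (LGen.st e) * FreeAlgebra.ι K (LGen.ed f)) 0
  | ck1 (e : E) :
      LRel (FreeAlgebra.ι K (LGen.st e) * FreeAlgebra.ι K (LGen.ed e))
        (FreeAlgebra.ι K (LGen.pr ⟨U.r e, IsG0.range e⟩))
  | ck2 (v : V) (h : U.IsRegular v) :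
      LRel (FreeAlgebra.ι K (LGen.pr ⟨{v}, IsG0.vertex v⟩))
        (h.2.toFinset.sum fun e => FreeAlgebra.ι K (LGen.ed e) * FreeAlgebra.ι K (LGen.st e))

/-- The ultragraph Leavitt path algebra `L_K(𝒢)`, presented by generators and relations.
(For a non-unital `L_K(𝒢)` this is its unitalization; the algebra itself is the
subspace `Lsub` spanned by the monomials `s_α p_A s*_β`.) -/
abbrev LPA : Type := RingQuot (LRel K U)

/-- The generator `p_A`. -/
def pGen (A : Set V) (h : U.IsG0 A) : LPA K U :=
  RingQuot.mkAlgHom K (LRel K U) (FreeAlgebra.ι K (LGen.pr ⟨A, h⟩))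

/-- The generator `s_e`. -/
def sGen (e : E) : LPA K U :=
  RingQuot.mkAlgHom K (LRel K U) (FreeAlgebra.ι K (LGen.ed e))

/-- The generator `s*_e`. -/
def stGen (e : E) : LPA K U :=
  RingQuot.mkAlgHom K (LRel K U) (FreeAlgebra.ι K (LGen.st e))

/-- `s_α` for a list of edges `α`. -/
def sPath (l : List E) : LPA K U := (l.map (sGen K U)).prod

/-- `s*_α` for a list of edges `α`. -/
def stPath (l : List E) : LPA K U := (l.reverse.map (stGen K U)).prod

/-- The degree-`n` homogeneous component
`L_K(𝒢)_n = span_K { s_α p_A s*_β : |α| − |β| = n }`. -/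
def homComp (n : ℤ) : Submodule K (LPA K U) :=
  Submodule.span K {x : LPA K U | ∃ (α β : List E) (A : Set V) (hA : U.IsG0 A),
    (α.length : ℤ) - (β.length : ℤ) = n ∧
    x = sPath K U α * pGen K U A hA * stPath K U β}

/-- The Leavitt path algebra `L_K(𝒢)` itself: the span of all monomials `s_α p_A s*_β`
inside the (possibly unitalized) presented algebra. -/
def Lsub : Submodule K (LPA K U) :=
  Submodule.span K {x : LPA K U | ∃ (α β : List E) (A : Set V) (hA : U.IsG0 A),
    x = sPath K U α * pGen K U A hA * stPath K U β}

/-- `s_α` for a finite path `α ∈ 𝒢*` (with `s_A = p_A` in length zero). -/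
def sFMono : (α : Set V ⊕ List E) → U.IsFPath α → LPA K U
  | Sum.inl A, h => pGen K U A h
  | Sum.inr l, _ => sPath K U l

/-- `s*_α` for a finite path `α ∈ 𝒢*` (with `s*_A = p_A` in length zero). -/
def stFMono : (α : Set V ⊕ List E) → U.IsFPath α → LPA K U
  | Sum.inl A, h => pGen K U A h
  | Sum.inr l, _ => stPath K U l

/-- A (two-sided) ideal of `L_K(𝒢)` (sitting inside the presented algebra). -/
def IsTwoSidedIdealOfL (I : Set (LPA K U)) : Prop :=
  I ⊆ (Lsub K U : Set (LPA K U)) ∧ (0 : LPA K U) ∈ I ∧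
    (∀ a ∈ I, ∀ b ∈ I, a + b ∈ I) ∧ (∀ a ∈ I, -a ∈ I) ∧
    (∀ k : K, ∀ a ∈ I, k • a ∈ I) ∧
    ∀ a ∈ I, ∀ x ∈ (Lsub K U : Set (LPA K U)), a * x ∈ I ∧ x * a ∈ I

/-- A right ideal of `L_K(𝒢)`. -/
def IsRightIdealOfL (I : Set (LPA K U)) : Prop :=
  I ⊆ (Lsub K U : Set (LPA K U)) ∧ (0 : LPA K U) ∈ I ∧
    (∀ a ∈ I, ∀ b ∈ I, a + b ∈ I) ∧ (∀ a ∈ I, -a ∈ I) ∧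
    (∀ k : K, ∀ a ∈ I, k • a ∈ I) ∧
    ∀ a ∈ I, ∀ x ∈ (Lsub K U : Set (LPA K U)), a * x ∈ I

/-- A left ideal of `L_K(𝒢)`. -/
def IsLeftIdealOfL (I : Set (LPA K U)) : Prop :=
  I ⊆ (Lsub K U : Set (LPA K U)) ∧ (0 : LPA K U) ∈ I ∧
    (∀ a ∈ I, ∀ b ∈ I, a + b ∈ I) ∧ (∀ a ∈ I, -a ∈ I) ∧
    (∀ k : K, ∀ a ∈ I, k • a ∈ I) ∧
    ∀ a ∈ I, ∀ x ∈ (Lsub K U : Set (LPA K U)), x * a ∈ I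

/-- A subset of `L_K(𝒢)` is graded if each of its elements is a sum of homogeneous
elements lying in it. -/
def IsGradedSet (I : Set (LPA K U)) : Prop :=
  I ⊆ (AddSubgroup.closure {a : LPA K U | a ∈ I ∧ ∃ n : ℤ, a ∈ homComp K U n} :
    Set (LPA K U))

/-- The right ideal of `L_K(𝒢)` generated by a set. -/
def rIdealGen (S : Set (LPA K U)) : Set (LPA K U) :=
  ⋂₀ {I : Set (LPA K U) | IsRightIdealOfL K U I ∧ S ⊆ I}

/-- The left ideal of `L_K(𝒢)` generated by a set. -/
def lIdealGen (S : Set (LPA K U)) : Set (LPA K U) :=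
  ⋂₀ {I : Set (LPA K U) | IsLeftIdealOfL K U I ∧ S ⊆ I}

/-- Powers of an ideal: `J, J², J³, …` (as sets, `idealPow J n = J^{n+1}`). -/
def idealPow (J : Set (LPA K U)) : ℕ → Set (LPA K U)
  | 0 => J
  | n + 1 => (AddSubgroup.closure
      {z : LPA K U | ∃ a ∈ J, ∃ b ∈ idealPow J n, z = a * b} : Set (LPA K U))

end Ultragraph

namespace Ultragraph

variable {V E : Type} (U : Ultragraph V E)

/-- Condition (2) of the strong-grading criterion: for every `k ∈ ℕ` and every infinite
path `p`, there are an initial subpath `x` of `p` and a finite path `y ∈ 𝒢*` with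
`r(x) = r(y)` and `|y| − |x| = k`. -/
def GradedCond2 : Prop :=
  ∀ (k : ℕ) (p : ℕ → E), U.IsIPath p →
    ∃ n : ℕ, 0 < n ∧ ∃ y : List E, y ≠ [] ∧ U.IsEdgePath y ∧
      U.rList y = U.r (p (n - 1)) ∧ (y.length : ℤ) - (n : ℤ) = (k : ℤ)

variable (K : Type) [Field K]

/-- The projection onto the degree-`n` homogeneous component (obtained by choice from the
internal decomposition of the grading; `0` if no such family of projections exists). -/
noncomputable def gradedProj (n : ℤ) : LPA K U →ₗ[K] LPA K U :=
  if h : ∃ P : ℤ → (LPA K U →ₗ[K] LPA K U),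
      (∀ (m : ℤ) (x : LPA K U), P m x ∈ homComp K U m) ∧
      (∀ m : ℤ, ∀ x ∈ homComp K U m, P m x = x) ∧
      (∀ m k' : ℤ, m ≠ k' → ∀ x ∈ homComp K U k', P m x = 0)
  then h.choose n else 0

/-- Multiplication of the smash product `L_K(𝒢) # ℤ`:
`(a p_m)(b p_n) = a·b_{m−n} p_n`, where elements of `L_K(𝒢) # ℤ` are finitely
supported functions `ℤ →₀ L_K(𝒢)`. -/
noncomputable def smashMul (x y : ℤ →₀ LPA K U) : ℤ →₀ LPA K U :=
  x.sum fun m a => y.sum fun n b => Finsupp.single n (a * gradedProj U K (m - n) b)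

end Ultragraph

/-- The skew product ultragraph `𝒢 ×₁ ℤ`. -/
def Ultragraph.skewZ {V E : Type} (U : Ultragraph V E) : Ultragraph (V × ℤ) (E × ℤ) where
  s := fun en => (U.s en.1, en.2)
  r := fun en => (fun w => (w, en.2 - 1)) '' U.r en.1
  r_nonempty := fun en => (U.r_nonempty en.1).image _

namespace Ultragraph

variable {V E : Type} (U : Ultragraph V E) (K : Type) [Field K]

/-- Composability of two groupoid elements. -/
def Composable (a b : U.Grpd) : Prop := a.1.2.2 = b.1.1

/-- Convolution product of functions on the groupoid:
`(f * g)(γ) = Σ_{γ = αβ} f(α) g(β)`. -/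
noncomputable def convK (f g : U.Grpd → K) : U.Grpd → K :=
  fun γ => ∑ᶠ q : {q : U.Grpd × U.Grpd // U.Composable q.1 q.2 ∧ compT q.1.1 q.2.1 = γ.1},
    f q.1.1 * g q.1.2

/-- A compact open bisection of the ultragraph groupoid. -/
def IsCOB (W : Set U.Grpd) : Prop :=
  IsCompact W ∧ IsOpen W ∧
    (∀ a ∈ W, ∀ b ∈ W, a.1.2.2 = b.1.2.2 → a = b) ∧
    ∀ a ∈ W, ∀ b ∈ W, a.1.1 = b.1.1 → a = b

/-- The Steinberg algebra `A_K(𝔊_𝒢)` (as a subspace of `K^{𝔊_𝒢}`): the `K`-span of the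
characteristic functions of compact open bisections. -/
def SteinbergSpan : Submodule K (U.Grpd → K) :=
  Submodule.span K {f : U.Grpd → K |
    ∃ W : Set U.Grpd, U.IsCOB W ∧ f = Set.indicator W fun _ => (1 : K)}

/-- The span of characteristic functions of `n`-homogeneous compact open bisections:
the degree-`n` component `A_K(𝔊_𝒢)_n`. -/
def SteinbergComp (n : ℤ) : Submodule K (U.Grpd → K) :=
  Submodule.span K {f : U.Grpd → K |
    ∃ W : Set U.Grpd, U.IsCOB W ∧ W ⊆ {g : U.Grpd | g.1.2.1 = n} ∧
      f = Set.indicator W fun _ => (1 : K)}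

end Ultragraph

namespace Ultragraph

variable {V E : Type} (K : Type) [Field K] (U : Ultragraph V E)

/-- The `K`-vector space `V_A` (`A = r(x)`), with basis `{z ∈ 𝔭 : r(z) = A}`. -/
abbrev ModVx (A : Set V) : Type :=
  {z : List E × Set V // U.IsUPath z ∧ z.2 = A} →₀ K

/-- The prescribed `L_K(𝒢)`-action on the basis of `V_A`, together with compatibility of
the `K`- and `L_K(𝒢)`-scalar multiplications. -/
def VxHyps (A : Set V) [instM : Module (LPA K U) (ModVx K U A)] : Prop :=
  (∀ (k : K) (a : LPA K U) (m : ModVx K U A), (k • a) • m = k • (a • m)) ∧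
  (∀ (B : Set V) (hB : U.IsG0 B) (z : {z : List E × Set V // U.IsUPath z ∧ z.2 = A}),
      ((B ∩ U.srcSet z.1).Nonempty →
        pGen K U B hB • Finsupp.single z (1 : K) = Finsupp.single z (1 : K)) ∧
      (¬ (B ∩ U.srcSet z.1).Nonempty →
        pGen K U B hB • Finsupp.single z (1 : K) = 0)) ∧
  (∀ (e : E) (z : {z : List E × Set V // U.IsUPath z ∧ z.2 = A}),
      ((U.r e ∩ U.srcSet z.1).Nonempty →
        ∀ z' : {z : List E × Set V // U.IsUPath z ∧ z.2 = A}, z'.1 = (e :: z.1.1, z.1.2) →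
          sGen K U e • Finsupp.single z (1 : K) = Finsupp.single z' (1 : K)) ∧
      (¬ (U.r e ∩ U.srcSet z.1).Nonempty →
        sGen K U e • Finsupp.single z (1 : K) = 0)) ∧
  (∀ (e : E) (z : {z : List E × Set V // U.IsUPath z ∧ z.2 = A}),
      (∀ l : List E, z.1.1 = e :: l →
        ∀ z' : {z : List E × Set V // U.IsUPath z ∧ z.2 = A}, z'.1 = (l, z.1.2) →
          stGen K U e • Finsupp.single z (1 : K) = Finsupp.single z' (1 : K)) ∧
      ((∀ l : List E, z.1.1 ≠ e :: l) →
        stGen K U e • Finsupp.single z (1 : K) = 0))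

/-- The `K`-vector space `V_{[p]}`, with basis the tail-equivalence class `[p]`. -/
abbrev ModVp (p : ℕ → E) : Type :=
  {q : ℕ → E // U.IsIPath q ∧ IPEquiv p q} →₀ K

/-- The prescribed `L_K(𝒢)`-action on the basis of `V_{[p]}`, together with compatibility
of the `K`- and `L_K(𝒢)`-scalar multiplications. -/
def VpHyps (p : ℕ → E) [instM : Module (LPA K U) (ModVp K U p)] : Prop :=
  (∀ (k : K) (a : LPA K U) (m : ModVp K U p), (k • a) • m = k • (a • m)) ∧
  (∀ (B : Set V) (hB : U.IsG0 B) (q : {q : ℕ → E // U.IsIPath q ∧ IPEquiv p q}),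
      (U.s (q.1 0) ∈ B →
        pGen K U B hB • Finsupp.single q (1 : K) = Finsupp.single q (1 : K)) ∧
      (U.s (q.1 0) ∉ B →
        pGen K U B hB • Finsupp.single q (1 : K) = 0)) ∧
  (∀ (e : E) (q : {q : ℕ → E // U.IsIPath q ∧ IPEquiv p q}),
      (U.s (q.1 0) ∈ U.r e →
        ∀ q' : {q : ℕ → E // U.IsIPath q ∧ IPEquiv p q}, q'.1 = prependL [e] q.1 →
          sGen K U e • Finsupp.single q (1 : K) = Finsupp.single q' (1 : K)) ∧
      (U.s (q.1 0) ∉ U.r e →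
        sGen K U e • Finsupp.single q (1 : K) = 0)) ∧
  (∀ (e : E) (q : {q : ℕ → E // U.IsIPath q ∧ IPEquiv p q}),
      (q.1 0 = e →
        ∀ q' : {q : ℕ → E // U.IsIPath q ∧ IPEquiv p q}, q'.1 = shiftL 1 q.1 →
          stGen K U e • Finsupp.single q (1 : K) = Finsupp.single q' (1 : K)) ∧
      (q.1 0 ≠ e →
        stGen K U e • Finsupp.single q (1 : K) = 0))

/-- A rational infinite path: tail-equivalent to `c^∞` for some cycle `c`. -/
def IsRationalP (p : ℕ → E) : Prop :=
  ∃ (c : List E) (hc : c ≠ []), U.IsCycle c ∧ IPEquiv p (periodicL c hc)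

/-- The Laurent polynomial ring `K[t,t⁻¹]`. -/
abbrev LaurK : Type := LaurentPolynomial K

/-- The quotient `K[t,t⁻¹]/(f)`. -/
abbrev QuotF (f : LaurK K) : Type := LaurK K ⧸ Ideal.span ({f} : Set (LaurK K))

/-- The prescribed right `K[t,t⁻¹]`-structure on `V_{[p]}` induced by the isotropy
action: for `p ∼ c^∞` with `c` a cycle, `t` acts by shifting by `|c|` (prepending `c`);
together with compatibility with the `K`-structure. -/
def VpLaurHyps (p : ℕ → E) [instF : Module (LaurK K) (ModVp K U p)] : Prop :=
  (∀ (k : K) (m : ModVp K U p), (algebraMap K (LaurK K) k) • m = k • m) ∧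
  (∀ (c : List E) (hc : c ≠ []), U.IsCycle c → IPEquiv p (periodicL c hc) →
    ∀ (q q' : {q : ℕ → E // U.IsIPath q ∧ IPEquiv p q}), q.1 = prependL c q'.1 →
      (LaurentPolynomial.T 1 : LaurK K) • Finsupp.single q' (1 : K) =
        Finsupp.single q (1 : K))

/-- The module `V^f_{[p]} = V_{[p]} ⊗_{K[t,t⁻¹]} K[t,t⁻¹]/(f)`. -/
abbrev ModVf (p : ℕ → E) (f : LaurK K) [instF : Module (LaurK K) (ModVp K U p)] : Type :=
  TensorProduct (LaurK K) (ModVp K U p) (QuotF K f)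

/-- The prescribed `L_K(𝒢)`-action on `V^f_{[p]}`: the action on simple tensors is the
`V_{[p]}`-action on the first factor, and it commutes with the `K[t,t⁻¹]`-action. -/
def VfHyps (p : ℕ → E) (f : LaurK K) [instF : Module (LaurK K) (ModVp K U p)]
    [instL : Module (LPA K U) (ModVf K U p f)] : Prop :=
  (∀ (u : LaurK K) (a : LPA K U) (m : ModVf K U p f), a • u • m = u • a • m) ∧
  (∀ (B : Set V) (hB : U.IsG0 B) (q : {q : ℕ → E // U.IsIPath q ∧ IPEquiv p q})
      (w : QuotF K f),
      (U.s (q.1 0) ∈ B →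
        pGen K U B hB • (Finsupp.single q (1 : K) ⊗ₜ[LaurK K] w) =
          Finsupp.single q (1 : K) ⊗ₜ[LaurK K] w) ∧
      (U.s (q.1 0) ∉ B →
        pGen K U B hB • (Finsupp.single q (1 : K) ⊗ₜ[LaurK K] w) = 0)) ∧
  (∀ (e : E) (q : {q : ℕ → E // U.IsIPath q ∧ IPEquiv p q}) (w : QuotF K f),
      (U.s (q.1 0) ∈ U.r e →
        ∀ q' : {q : ℕ → E // U.IsIPath q ∧ IPEquiv p q}, q'.1 = prependL [e] q.1 →
          sGen K U e • (Finsupp.single q (1 : K) ⊗ₜ[LaurK K] w) =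
            Finsupp.single q' (1 : K) ⊗ₜ[LaurK K] w) ∧
      (U.s (q.1 0) ∉ U.r e →
        sGen K U e • (Finsupp.single q (1 : K) ⊗ₜ[LaurK K] w) = 0)) ∧
  (∀ (e : E) (q : {q : ℕ → E // U.IsIPath q ∧ IPEquiv p q}) (w : QuotF K f),
      (q.1 0 = e →
        ∀ q' : {q : ℕ → E // U.IsIPath q ∧ IPEquiv p q}, q'.1 = shiftL 1 q.1 →
          stGen K U e • (Finsupp.single q (1 : K) ⊗ₜ[LaurK K] w) =
            Finsupp.single q' (1 : K) ⊗ₜ[LaurK K] w) ∧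
      (q.1 0 ≠ e →
        stGen K U e • (Finsupp.single q (1 : K) ⊗ₜ[LaurK K] w) = 0))

end Ultragraph

namespace Ultragraph

variable {V E : Type} (U : Ultragraph V E)

/-- `μ` is eventually periodic: `μ = p·σσσ⋯` for a finite list `p` and a cycle `σ`. -/
def IsEvPeriodic (μ : XType V E) : Prop :=
  ∃ (l c : List E) (hc : c ≠ []), U.IsCycle c ∧ μ = Sum.inr (prependL l (periodicL c hc))

end Ultragraph


/-! Ultrasets are singletons, so without infinite emitters every unit of `𝔊_𝒢` is an infinite
path and `𝔊_𝒢` is the path groupoid `{(p, a - b, q) : σᵃ p = σᵇ q}`. There condition (2) says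
exactly that every infinite path is the source of an arrow of every degree, which is what is
needed to factor an arrow of degree `m + n` through degree `m`. Conversely, if `v` is an
infinite emitter, the unit `({v}, 0, {v})` does not factor through degree `1`, because an arrow
whose range has length zero has degree `≤ 0`; and factoring the unit at an infinite path `p`
through degrees `-k` and `k` gives an arrow `(p₀, k, p)`, whose first edges form the finite path
required by condition (2). -/

/-- `(p, k, q)` is an arrow of the path groupoid on infinite paths. -/
def ShiftEquiv {E : Type} (k : ℤ) (p q : ℕ → E) : Prop :=
  ∃ a b : ℕ, shiftL a p = shiftL b q ∧ k = a - b

section Shift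

variable {E : Type}

lemma shiftL_shiftL (a b : ℕ) (p : ℕ → E) : shiftL a (shiftL b p) = shiftL (a + b) p :=
  funext fun n => by simp only [shiftL, add_assoc]

lemma prependL_of_lt {l : List E} {p : ℕ → E} {n : ℕ} (h : n < l.length) :
    prependL l p n = l[n] := dif_pos h

lemma prependL_of_le {l : List E} {p : ℕ → E} {n : ℕ} (h : l.length ≤ n) :
    prependL l p n = p (n - l.length) := dif_neg (by omega)

lemma shiftL_length_prependL (l : List E) (p : ℕ → E) : shiftL l.length (prependL l p) = p :=
  funext fun n => by simp [shiftL, prependL_of_le]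

lemma prependL_ofFn_shiftL (p : ℕ → E) (n : ℕ) :
    prependL (List.ofFn fun i : Fin n => p i) (shiftL n p) = p := by
  funext k
  rcases lt_or_ge k n with h | h
  · simp [prependL_of_lt, h]
  · rw [prependL_of_le (by simpa using h)]
    simp only [shiftL, List.length_ofFn]
    congr 1
    omega

lemma getLast?_ofFn_succ (p : ℕ → E) (n : ℕ) :
    (List.ofFn fun i : Fin (n + 1) => p i).getLast? = some (p n) := by
  rw [List.getLast?_eq_some_getLast (by simp), List.getLast_ofFn_succ]
  simp

lemma ShiftEquiv.refl (p : ℕ → E) : ShiftEquiv 0 p p := ⟨0, 0, rfl, rfl⟩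

lemma shiftEquiv_shiftL (k : ℕ) (p : ℕ → E) : ShiftEquiv k p (shiftL k p) :=
  ⟨k, 0, by rw [shiftL_shiftL, zero_add], by simp⟩

lemma ShiftEquiv.symm {k : ℤ} {p q : ℕ → E} (h : ShiftEquiv k p q) : ShiftEquiv (-k) q p := by
  obtain ⟨a, b, hab, rfl⟩ := h
  exact ⟨b, a, hab.symm, by ring⟩

lemma ShiftEquiv.trans {k l : ℤ} {p q r : ℕ → E} (hpq : ShiftEquiv k p q)
    (hqr : ShiftEquiv l q r) : ShiftEquiv (k + l) p r := by
  obtain ⟨a, b, hab, rfl⟩ := hpq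
  obtain ⟨c, d, hcd, rfl⟩ := hqr
  refine ⟨c + a, b + d, ?_, by push_cast; ring⟩
  rw [← shiftL_shiftL, hab, shiftL_shiftL, add_comm c b, ← shiftL_shiftL, hcd, shiftL_shiftL]

end Shift

namespace Ultragraph

variable {V E : Type} {U : Ultragraph V E}

lemma IsIPath.shiftL {p : ℕ → E} (hp : U.IsIPath p) (n : ℕ) : U.IsIPath (shiftL n p) :=
  fun k => by simpa [_root_.shiftL, Nat.add_right_comm] using hp (k + n)

lemma IsIPath.isEdgePath_ofFn {p : ℕ → E} (hp : U.IsIPath p) (n : ℕ) :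
    U.IsEdgePath (List.ofFn fun i : Fin n => p i) :=
  List.isChain_iff_getElem.mpr fun i _ => by simpa [Adj] using hp i

lemma rList_ofFn_succ (p : ℕ → E) (n : ℕ) :
    U.rList (List.ofFn fun i : Fin (n + 1) => p i) = U.r (p n) := by
  rw [rList, getLast?_ofFn_succ]

lemma isIPath_prependL {l : List E} {q : ℕ → E} (hl : U.IsEdgePath l) (hq : U.IsIPath q)
    (hlq : ∀ e, l.getLast? = some e → U.s (q 0) ∈ U.r e) : U.IsIPath (prependL l q) := by
  intro n
  rcases lt_trichotomy (n + 1) l.length with h | h | h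
  · rw [prependL_of_lt h, prependL_of_lt (by omega)]
    exact List.isChain_iff_getElem.mp hl n h
  · rw [prependL_of_lt (by omega), prependL_of_le h.ge, h, Nat.sub_self]
    apply hlq
    rw [List.getLast?_eq_getElem?, show l.length - 1 = n by omega]
    simp
  · rw [prependL_of_le (by omega), prependL_of_le (by omega), Nat.sub_add_comm (by omega)]
    exact hq _

lemma IsIPath.isUPath_ofFn {p : ℕ → E} (hp : U.IsIPath p) (a : ℕ) :
    U.IsUPath (List.ofFn (fun i : Fin a => p i), {U.s (p a)}) := by
  refine ⟨hp.isEdgePath_ofFn a, IsG0.vertex _, fun e he => ?_⟩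
  obtain _ | a := a
  · simp at he
  · rw [getLast?_ofFn_succ, Option.some_inj] at he
    simpa [← he] using hp a

lemma isFilterG0_principalFilter {A : Set V} (hA : A.Nonempty) :
    U.IsFilterG0 (U.principalFilter A) :=
  ⟨fun _ hB => hB.1, fun h => Set.not_nonempty_empty (hA.mono h.2),
    fun _ hB _ hC => ⟨hB.1.inter hC.1, Set.subset_inter hB.2 hC.2⟩,
    fun _ hB _ hC hBC => ⟨hC, hB.2.trans hBC⟩⟩

lemma isUltraset_singleton (v : V) : U.IsUltraset {v} := by
  refine ⟨IsG0.vertex v, isFilterG0_principalFilter (Set.singleton_nonempty v), ?_⟩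
  rintro F ⟨hFG0, hF0, hFinter, -⟩ hvF
  refine Set.Subset.antisymm (fun B hB => ⟨hFG0 B hB, ?_⟩) hvF
  have hBv := hFinter B hB {v} (hvF ⟨IsG0.vertex v, subset_rfl⟩)
  have : (B ∩ {v}).Nonempty := Set.nonempty_iff_ne_empty.mpr fun h => hF0 (h ▸ hBv)
  exact Set.singleton_subset_iff.mpr (Set.inter_singleton_nonempty.mp this)

lemma IsUltraset.exists_eq_singleton {A : Set V} (h : U.IsUltraset A) : ∃ v, A = {v} := by
  obtain ⟨v, hv⟩ : A.Nonempty :=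
    Set.nonempty_iff_ne_empty.mpr fun hA => h.2.1.2.1 (hA ▸ ⟨h.1, subset_rfl⟩)
  have hmax := h.2.2 _ (isFilterG0_principalFilter (Set.singleton_nonempty v))
    fun B hB => ⟨hB.1, Set.singleton_subset_iff.mpr (hB.2 hv)⟩
  have hvA : {v} ∈ U.principalFilter A := hmax ▸ ⟨IsG0.vertex v, subset_rfl⟩
  exact ⟨v, Set.Subset.antisymm hvA.2 (Set.singleton_subset_iff.mpr hv)⟩

lemma IsXEl.exists_eq_inr (hNIE : U.NoInfiniteEmitters) {μ : XType V E} (h : U.IsXEl μ) :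
    ∃ q, μ = Sum.inr q := by
  obtain y | q := μ
  · obtain ⟨v, hv⟩ := h.2.1.exists_eq_singleton
    exact absurd (by simpa [InfEmitterSet, hv] using h.2.2) (hNIE v).not_infinite
  · exact ⟨q, rfl⟩

lemma inGrpd_inr_iff {u : XType V E} {k : ℤ} {q : ℕ → E} :
    U.InGrpd (u, k, Sum.inr q) ↔
      ∃ p, u = Sum.inr p ∧ U.IsIPath p ∧ U.IsIPath q ∧ ShiftEquiv k p q := by
  constructor
  · rintro ⟨x, y, μ, -, -, -, -, -, -, hXx, hXy, heq⟩
    obtain z | μ := μ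
    · simp [concatXel] at heq
    · simp only [concatXel, Prod.mk.injEq, Sum.inr.injEq] at heq
      obtain ⟨rfl, rfl, rfl⟩ := heq
      exact ⟨_, rfl, hXx, hXy, x.1.length, y.1.length,
        by rw [shiftL_length_prependL, shiftL_length_prependL], rfl⟩
  · rintro ⟨p, rfl, hp, hq, a, b, hab, rfl⟩
    have hpq : p a = q b := by simpa [shiftL] using congrFun hab 0
    have hy := hq.isUPath_ofFn b
    rw [← hpq] at hy
    refine ⟨_, _, Sum.inr (shiftL a p), hp.isUPath_ofFn a, hy, hp.shiftL a, rfl,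
      by simp [CanConcatX, shiftL], by simp [CanConcatX, shiftL], ?_, ?_, ?_⟩
    · simpa only [concatXel, IsXEl, prependL_ofFn_shiftL] using hp
    · simpa only [concatXel, IsXEl, hab, prependL_ofFn_shiftL] using hq
    · simp only [concatXel, List.length_ofFn]
      rw [prependL_ofFn_shiftL, hab, prependL_ofFn_shiftL]

lemma InGrpd.exists_eq_inr (hNIE : U.NoInfiniteEmitters) {g : Trip V E} (h : U.InGrpd g) :
    ∃ q, g.2.2 = Sum.inr q := by
  obtain ⟨x, y, μ, -, -, hμ, -, -, -, -, -, rfl⟩ := h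
  obtain ⟨q, rfl⟩ := hμ.exists_eq_inr hNIE
  exact ⟨_, rfl⟩

lemma inGrpd_inr_unit {p : ℕ → E} (hp : U.IsIPath p) : U.InGrpd (Sum.inr p, 0, Sum.inr p) :=
  inGrpd_inr_iff.mpr ⟨p, rfl, hp, hp, ShiftEquiv.refl p⟩

lemma inGrpd_inl_unit {v : V} (hv : {e : E | U.s e = v}.Infinite) :
    U.InGrpd (Sum.inl ([], {v}), 0, Sum.inl ([], {v})) := by
  have hx : U.IsUPath ([], {v}) := ⟨List.isChain_nil, IsG0.vertex v, by simp⟩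
  have hμ : U.IsXEl (Sum.inl ([], {v})) := ⟨hx, isUltraset_singleton v, hv⟩
  have hcat : concatXel ([], {v}) (Sum.inl ([], {v})) = (Sum.inl ([], {v}) : XType V E) := by
    simp [concatXel, concatU]
  have hcan : U.CanConcatX ([], {v}) (Sum.inl ([], {v})) := ⟨v, rfl, rfl⟩
  exact ⟨_, _, _, hx, hx, hμ, rfl, hcan, hcan, by rwa [hcat], by rwa [hcat], by rw [hcat]; simp⟩

lemma InGrpd.deg_nonpos_of_fst_eq_inl_nil {A : Set V} {k : ℤ} {w : XType V E}
    (h : U.InGrpd (Sum.inl ([], A), k, w)) : k ≤ 0 := by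
  obtain ⟨x, y, μ, -, -, -, -, -, -, -, -, heq⟩ := h
  obtain z | q := μ
  · simp only [concatXel, concatU, Prod.mk.injEq, Sum.inl.injEq] at heq
    obtain ⟨⟨hnil, -⟩, rfl, -⟩ := heq
    rw [(List.append_eq_nil_iff.mp hnil.symm).1]
    simp
  · simp [concatXel] at heq

lemma inGrpd_compT (hNIE : U.NoInfiniteEmitters) {a b : Trip V E} (ha : U.InGrpd a)
    (hb : U.InGrpd b) (hab : a.2.2 = b.1) : U.InGrpd (compT a b) := by
  obtain ⟨u, k, w⟩ := a
  obtain ⟨w', l, z⟩ := b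
  obtain rfl : w = w' := hab
  obtain ⟨r, rfl⟩ := hb.exists_eq_inr hNIE
  obtain ⟨q, rfl, -, hr, hqr⟩ := inGrpd_inr_iff.mp hb
  obtain ⟨p, rfl, hp, -, hpq⟩ := inGrpd_inr_iff.mp ha
  exact inGrpd_inr_iff.mpr ⟨p, rfl, hp, hr, hpq.trans hqr⟩

lemma gradedCond2_iff : U.GradedCond2 ↔
    ∀ (k : ℕ) (p : ℕ → E), U.IsIPath p → ∃ p₀, U.IsIPath p₀ ∧ ShiftEquiv k p₀ p := by
  constructor
  · intro h2 k p hp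
    obtain ⟨n, hn, y, -, hy, hyr, hyk⟩ := h2 k p hp
    refine ⟨prependL y (shiftL n p), isIPath_prependL hy (hp.shiftL n) fun e he => ?_,
      y.length, n, shiftL_length_prependL y _, hyk.symm⟩
    rw [show U.r e = U.rList y by rw [rList, he], hyr]
    simpa [shiftL, Nat.sub_add_cancel hn] using hp (n - 1)
  · rintro h k p hp
    obtain ⟨p₀, hp₀, a, b, hab, hk⟩ := h k p hp
    have hpq : p₀ a = p b := by simpa [shiftL] using congrFun hab 0
    refine ⟨b + 1, b.succ_pos, List.ofFn fun i : Fin (a + 1) => p₀ i, by simp,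
      hp₀.isEdgePath_ofFn _, by rw [rList_ofFn_succ, hpq, Nat.add_sub_cancel], ?_⟩
    simp only [List.length_ofFn]
    push_cast
    omega

lemma exists_shiftEquiv (h2 : U.GradedCond2) {p : ℕ → E} (hp : U.IsIPath p) (m : ℤ) :
    ∃ q, U.IsIPath q ∧ ShiftEquiv m p q := by
  obtain ⟨k, rfl | rfl⟩ := m.eq_nat_or_neg
  · exact ⟨shiftL k p, hp.shiftL k, shiftEquiv_shiftL k p⟩
  · obtain ⟨q, hq, hqp⟩ := gradedCond2_iff.mp h2 k p hp
    exact ⟨q, hq, hqp.symm⟩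

lemma noInfiniteEmitters_of_setMulG_eq
    (h : setMulG (U.gradeSet 1) (U.gradeSet (-1)) = U.gradeSet 0) : U.NoInfiniteEmitters := by
  intro v
  by_contra hv
  have hunit : (Sum.inl ([], {v}), 0, Sum.inl ([], {v})) ∈ U.gradeSet 0 :=
    ⟨inGrpd_inl_unit (Set.not_finite.mp hv), rfl⟩
  obtain ⟨⟨u, k, w⟩, ⟨ha, ha1⟩, b, -, -, hab⟩ := h.ge hunit
  obtain rfl : Sum.inl ([], {v}) = u := congrArg Prod.fst hab
  have := ha.deg_nonpos_of_fst_eq_inl_nil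
  simp only at ha1
  omega

lemma gradedCond2_of_setMulG_eq
    (h : ∀ k : ℕ, setMulG (U.gradeSet (-k)) (U.gradeSet k) = U.gradeSet 0) :
    U.GradedCond2 := by
  refine gradedCond2_iff.mpr fun k p hp => ?_
  have hunit : (Sum.inr p, 0, Sum.inr p) ∈ U.gradeSet 0 := ⟨inGrpd_inr_unit hp, rfl⟩
  obtain ⟨_, -, ⟨u, l, w⟩, ⟨hb, rfl⟩, -, hab⟩ := (h k).ge hunit
  obtain rfl : Sum.inr p = w := congrArg (·.2.2) hab
  obtain ⟨p₀, -, hp₀, -, h⟩ := inGrpd_inr_iff.mp hb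
  exact ⟨p₀, hp₀, h⟩

lemma setMulG_gradeSet (hNIE : U.NoInfiniteEmitters) (h2 : U.GradedCond2) (m n : ℤ) :
    setMulG (U.gradeSet m) (U.gradeSet n) = U.gradeSet (m + n) := by
  ext ⟨u, k, w⟩
  constructor
  · rintro ⟨a, ⟨ha, rfl⟩, b, ⟨hb, rfl⟩, hab, hc⟩
    exact hc ▸ ⟨inGrpd_compT hNIE ha hb hab, rfl⟩
  · rintro ⟨hc, hk : k = m + n⟩
    obtain ⟨r, rfl⟩ := hc.exists_eq_inr hNIE
    obtain ⟨p, rfl, hp, hr, hpr⟩ := inGrpd_inr_iff.mp hc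
    obtain ⟨q, hq, hpq⟩ := exists_shiftEquiv h2 hp m
    have hqr : ShiftEquiv n q r := by simpa [hk] using hpq.symm.trans hpr
    exact ⟨_, ⟨inGrpd_inr_iff.mpr ⟨p, rfl, hp, hq, hpq⟩, rfl⟩,
      _, ⟨inGrpd_inr_iff.mpr ⟨q, rfl, hq, hr, hqr⟩, rfl⟩, rfl, by simp [compT, hk]⟩

end Ultragraph

open Ultragraph in
theorem ultragraph_groupoid_strongly_graded_iff_general
    (V E : Type) (U : Ultragraph V E) :
    (∀ m n : ℤ, setMulG (U.gradeSet m) (U.gradeSet n) = U.gradeSet (m + n)) ↔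
      (U.NoInfiniteEmitters ∧ U.GradedCond2) := by
  constructor
  · intro h
    exact ⟨noInfiniteEmitters_of_setMulG_eq (by simpa using h 1 (-1)),
      gradedCond2_of_setMulG_eq fun k => by simpa using h (-k) k⟩
  · rintro ⟨hNIE, h2⟩
    exact setMulG_gradeSet hNIE h2

open Ultragraph in
/-- For an ultragraph `𝒢` without sinks, the ultragraph groupoid `𝔊_𝒢`
is strongly ℤ-graded iff `𝒢` has no infinite emitters and condition (2) holds. -/
theorem ultragraph_groupoid_strongly_graded_iff
    (V E : Type) [Countable V] [Countable E] (U : Ultragraph V E)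
    (hns : U.HasNoSinks) :
    (∀ m n : ℤ, setMulG (U.gradeSet m) (U.gradeSet n) = U.gradeSet (m + n)) ↔
      (U.NoInfiniteEmitters ∧ U.GradedCond2) :=
  ultragraph_groupoid_strongly_graded_iff_general V E U
end
end

section
/- Let K be a field and 𝒢 an ultragraph without sinks. In the ultragraph Leavitt path algebra L_K(𝒢), every monomial of the form s_α p_A s*_β with α, β ∈ 𝒢*, A ∈ 𝒢⁰, and r(α) ∩ r(β) ∩ A ≠ ∅ is nonzero. -/
set_option synthInstance.maxHeartbeats 1000000
set_option maxHeartbeats 1000000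

noncomputable section
open Classical TensorProduct

/-!
`L_K(𝒢)` acts on the functions on infinite paths: `p_A` cuts down to the paths starting in `A`,
`s_e` strips a leading `e`, and `s*_e` prepends `e`; the relations hold because consecutive edges
of an infinite path are composable. If `q` is an infinite path starting at
`v ∈ r(α) ∩ r(β) ∩ A` (it exists since there are no sinks), then `s_α p_A s*_β` sends the
constant function `1` to a function taking the value `1` at `αq`.
-/

section GuardedComp

variable {X : Type*} (K : Type*) [CommSemiring K]

def guardedComp (P : X → Prop) [DecidablePred P] (σ : X → X) : Module.End K (X → K) where
  toFun φ x := if P x then φ (σ x) else 0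
  map_add' φ ψ := by ext x; by_cases h : P x <;> simp [h]
  map_smul' c φ := by ext x; by_cases h : P x <;> simp [h]

@[simp]
lemma guardedComp_apply (P : X → Prop) [DecidablePred P] (σ : X → X) (φ : X → K) (x : X) :
    guardedComp K P σ φ x = if P x then φ (σ x) else 0 := rfl

end GuardedComp

namespace Ultragraph

open Stream'

variable {V E : Type} {U : Ultragraph V E}

lemma isIPath_cons {e : E} {q : Stream' E} :
    U.IsIPath (e :: q) ↔ U.s q.head ∈ U.r e ∧ U.IsIPath q :=
  ⟨fun h => ⟨h 0, fun n => h (n + 1)⟩, fun ⟨he, hq⟩ n => n.casesOn he hq⟩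

lemma IsIPath.tail {q : Stream' E} (hq : U.IsIPath q) : U.IsIPath q.tail :=
  fun n => hq (n + 1)

lemma isIPath_append_stream {l : List E} {q : Stream' E} (hl : l.IsChain U.Adj)
    (hq : U.IsIPath q) (hv : U.s q.head ∈ U.rList l) : U.IsIPath (l ++ₛ q) := by
  induction l with
  | nil => simpa using hq
  | cons e l ih =>
    rw [cons_append_stream, isIPath_cons]
    cases l with
    | nil => exact ⟨hv, hq⟩
    | cons f l =>
      obtain ⟨hef, hl⟩ := List.isChain_cons_cons.mp hl
      exact ⟨hef, ih hl hv⟩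

variable (U) in
abbrev InfPath : Type := {q : Stream' E // U.IsIPath q}

lemma HasNoSinks.exists_infPath (hns : U.HasNoSinks) (v : V) :
    ∃ q : U.InfPath, U.s q.1.head = v := by
  choose out hout using hns
  choose next hnext using U.r_nonempty
  let w : ℕ → V := fun n => n.rec v fun _ w => next (out w)
  refine ⟨⟨fun n => out (w n), fun n => ?_⟩, hout v⟩
  rw [hout]
  exact hnext _

namespace InfPath

def tail (q : U.InfPath) : U.InfPath := ⟨q.1.tail, q.2.tail⟩

lemma val_tail (q : U.InfPath) : q.tail.1 = q.1.tail := rfl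

/-- `e q` when `s(q) ∈ r(e)`, and the junk value `q` otherwise (where `s*_e` multiplies by `0`). -/
def cons (e : E) (q : U.InfPath) : U.InfPath :=
  if h : U.s q.1.head ∈ U.r e then ⟨e :: q.1, isIPath_cons.2 ⟨h, q.2⟩⟩ else q

lemma val_cons {e : E} {q : U.InfPath} (h : U.s q.1.head ∈ U.r e) :
    (cons e q).1 = e :: q.1 := by
  rw [cons, dif_pos h]

lemma tail_cons {e : E} {q : U.InfPath} (h : U.s q.1.head ∈ U.r e) :
    (cons e q).tail = q :=
  Subtype.ext (by rw [val_tail, val_cons h, Stream'.tail_cons])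

lemma head_cons {e : E} {q : U.InfPath} (h : U.s q.1.head ∈ U.r e) :
    (cons e q).1.head = e := by
  rw [val_cons h, Stream'.head_cons]

lemma cons_tail {e : E} {q : U.InfPath} (h : q.1.head = e) : cons e q.tail = q :=
  Subtype.ext (by rw [val_cons (h ▸ q.2 0), ← h]; exact Stream'.eta q.1)

end InfPath

variable (K : Type) [Field K] (U)

def genOp : LGen U → Module.End K (U.InfPath → K)
  | .pr A => guardedComp K (fun q => U.s q.1.head ∈ A.1) id
  | .ed e => guardedComp K (fun q => q.1.head = e) InfPath.tail
  | .st e => guardedComp K (fun q => U.s q.1.head ∈ U.r e) (InfPath.cons e)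

lemma genOp_respects_rel ⦃a b : FreeAlgebra K (LGen U)⦄ (hab : LRel K U a b) :
    FreeAlgebra.lift K (genOp U K) a = FreeAlgebra.lift K (genOp U K) b := by
  cases hab
  all_goals
    ext φ q
    simp only [FreeAlgebra.lift_ι_apply, map_mul, map_zero, map_add, map_sub, map_sum,
      Module.End.mul_apply, genOp, guardedComp_apply, LinearMap.add_apply, LinearMap.sub_apply,
      LinearMap.zero_apply, LinearMap.sum_apply, Pi.add_apply, Pi.sub_apply, Pi.zero_apply,
      Finset.sum_apply]
  all_goals have hpath : U.s q.tail.1.head ∈ U.r q.1.head := q.2 0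
  case ck2 => simp [Finset.sum_ite_eq, hpath, InfPath.cons_tail]
  all_goals split_ifs <;> simp_all [InfPath.tail_cons, InfPath.head_cons]

def pathRep : LPA K U →ₐ[K] Module.End K (U.InfPath → K) :=
  RingQuot.liftAlgHom K ⟨FreeAlgebra.lift K (genOp U K), genOp_respects_rel U K⟩

variable {U K}

lemma pathRep_pGen_apply (A : Set V) (hA : U.IsG0 A) (φ : U.InfPath → K) (q : U.InfPath) :
    pathRep U K (pGen K U A hA) φ q = if U.s q.1.head ∈ A then φ q else 0 := by
  rw [pGen, pathRep, RingQuot.liftAlgHom_mkAlgHom_apply, FreeAlgebra.lift_ι_apply]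
  rfl

lemma pathRep_sGen_apply (e : E) (φ : U.InfPath → K) (q : U.InfPath) :
    pathRep U K (sGen K U e) φ q = if q.1.head = e then φ q.tail else 0 := by
  rw [sGen, pathRep, RingQuot.liftAlgHom_mkAlgHom_apply, FreeAlgebra.lift_ι_apply]
  rfl

lemma pathRep_stGen_apply (e : E) (φ : U.InfPath → K) (q : U.InfPath) :
    pathRep U K (stGen K U e) φ q =
      if U.s q.1.head ∈ U.r e then φ (q.cons e) else 0 := by
  rw [stGen, pathRep, RingQuot.liftAlgHom_mkAlgHom_apply, FreeAlgebra.lift_ι_apply]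
  rfl

lemma pathRep_sPath_apply (l : List E) {q q' : U.InfPath} (hq' : q'.1 = l ++ₛ q.1)
    (φ : U.InfPath → K) : pathRep U K (sPath K U l) φ q' = φ q := by
  induction l generalizing q' with
  | nil => simp [sPath, ← Subtype.ext hq']
  | cons e l ih =>
    rw [cons_append_stream] at hq'
    have hhead : q'.1.head = e := by rw [hq', head_cons]
    rw [sPath, List.map_cons, List.prod_cons, map_mul, Module.End.mul_apply,
      pathRep_sGen_apply, if_pos hhead]
    exact ih (by rw [InfPath.val_tail, hq', tail_cons])

lemma pathRep_stPath_apply (l : List E) {q q' : U.InfPath} (hq' : q'.1 = l ++ₛ q.1)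
    (φ : U.InfPath → K) : pathRep U K (stPath K U l) φ q = φ q' := by
  induction l generalizing q' φ with
  | nil => simp [stPath, ← Subtype.ext hq']
  | cons e l ih =>
    rw [cons_append_stream] at hq'
    have hhead : q'.1.head = e := by rw [hq', head_cons]
    rw [stPath, List.reverse_cons, List.map_append, List.prod_append, List.map_singleton,
      List.prod_singleton, map_mul, Module.End.mul_apply, ← stPath,
      ih (by rw [InfPath.val_tail, hq', tail_cons]), pathRep_stGen_apply,
      if_pos (hhead ▸ q'.2 0), InfPath.cons_tail hhead]

lemma exists_pathRep_sFMono_apply {α : Set V ⊕ List E} (hα : U.IsFPath α) {q : U.InfPath}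
    (hq : U.s q.1.head ∈ U.rF α) :
    ∃ q' : U.InfPath, ∀ φ : U.InfPath → K, pathRep U K (sFMono K U α hα) φ q' = φ q := by
  cases α with
  | inl A => exact ⟨q, fun φ => (pathRep_pGen_apply A hα φ q).trans (if_pos hq)⟩
  | inr l =>
    exact ⟨⟨l ++ₛ q.1, isIPath_append_stream hα.2 q.2 hq⟩, pathRep_sPath_apply l rfl⟩

lemma exists_pathRep_stFMono_apply {β : Set V ⊕ List E} (hβ : U.IsFPath β) {q : U.InfPath}
    (hq : U.s q.1.head ∈ U.rF β) :
    ∃ q' : U.InfPath, ∀ φ : U.InfPath → K, pathRep U K (stFMono K U β hβ) φ q = φ q' := by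
  cases β with
  | inl B => exact ⟨q, fun φ => (pathRep_pGen_apply B hβ φ q).trans (if_pos hq)⟩
  | inr l =>
    exact ⟨⟨l ++ₛ q.1, isIPath_append_stream hβ.2 q.2 hq⟩, pathRep_stPath_apply l rfl⟩

end Ultragraph

open Ultragraph in
theorem ultragraph_leavitt_monomials_nonzero_general
    (K : Type) [Field K] (V E : Type)
    (U : Ultragraph V E) (hns : U.HasNoSinks) :
    ∀ (α : Set V ⊕ List E) (hα : U.IsFPath α) (β : Set V ⊕ List E) (hβ : U.IsFPath β)
      (A : Set V) (hA : U.IsG0 A),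
      (U.rF α ∩ U.rF β ∩ A).Nonempty →
      sFMono K U α hα * pGen K U A hA * stFMono K U β hβ ≠ 0 := by
  rintro α hα β hβ A hA ⟨v, ⟨hvα, hvβ⟩, hvA⟩ hzero
  obtain ⟨q, rfl⟩ := hns.exists_infPath v
  obtain ⟨qα, hqα⟩ := exists_pathRep_sFMono_apply (K := K) hα hvα
  obtain ⟨qβ, hqβ⟩ := exists_pathRep_stFMono_apply (K := K) hβ hvβ
  have h := congrArg (fun a => pathRep U K a 1 qα) hzero
  simp only [map_mul, Module.End.mul_apply, hqα, pathRep_pGen_apply, if_pos hvA, hqβ,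
    map_zero, LinearMap.zero_apply, Pi.one_apply, Pi.zero_apply] at h
  exact one_ne_zero h

open Ultragraph in
/-- In `L_K(𝒢)` (`𝒢` without sinks), every monomial `s_α p_A s*_β` with
`α, β ∈ 𝒢*`, `A ∈ 𝒢⁰` and `r(α) ∩ r(β) ∩ A ≠ ∅` is nonzero. -/
theorem ultragraph_leavitt_monomials_nonzero
    (K : Type) [Field K] (V E : Type) [Countable V] [Countable E]
    (U : Ultragraph V E) (hns : U.HasNoSinks) :
    ∀ (α : Set V ⊕ List E) (hα : U.IsFPath α) (β : Set V ⊕ List E) (hβ : U.IsFPath β)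
      (A : Set V) (hA : U.IsG0 A),
      (U.rF α ∩ U.rF β ∩ A).Nonempty →
      sFMono K U α hα * pGen K U A hA * stFMono K U β hβ ≠ 0 :=
  ultragraph_leavitt_monomials_nonzero_general K V E U hns
end
end

section
/- Let K be a field, 𝒢 an ultragraph without sinks, and x, y ∈ Y_∞. Let V_x be the K-vector space with basis {z ∈ 𝔭 : r(z) = r(x)}, made into a left L_K(𝒢)-module by the K-linear extension of: p_A·z = z if s(z) ∈ A and 0 otherwise; s_e·z = (e e₁⋯eₙ, r(x)) if z = (e₁⋯eₙ, r(x)) and s(z) ∈ r(e), and 0 otherwise; s*_e·z = (e₂⋯eₙ, r(x)) if z = (e₁⋯eₙ, r(x)) with e = e₁, and 0 otherwise; and s*_e·r(x) = 0. Then: (1) V_x is a simple left L_K(𝒢)-module; (2) V_x ≅ V_y as left L_K(𝒢)-modules if and only if r(x) = r(y), which happens precisely when V_x = V_y; (3) End_{L_K(𝒢)}(V_x) ≅ K. -/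
set_option synthInstance.maxHeartbeats 1000000
set_option maxHeartbeats 1000000

noncomputable section
open Classical TensorProduct

/-!
Let `ω ∈ V_A` be the basis vector given by the length-zero ultrapath `A`. Every basis vector
`(α, A)` equals `s_α ω`, so `ω` generates `V_A`. Conversely, if `z` has maximal length in the
support of `m ≠ 0`, no other element of the support has `z` as a prefix, so `s*_z m` is a nonzero
multiple of `ω`; hence every nonzero vector generates `V_A`, which is therefore simple.
The vectors killed by all `s*_e` are the multiples of `ω`. So an endomorphism sends `ω` to `c ω`
and is multiplication by `c`, and an isomorphism `V_A ≅ V_B` sends `ω` to a nonzero multiple of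
`ω_B`; since `p_A` fixes `ω`, it does not kill `ω_B`, so `A ∩ B ≠ ∅`, and two ultrasets that meet
are equal. Conversely the action is determined by its prescribed values on the generators, so
`r(x) = r(y)` makes `V_x` and `V_y` the same module.
-/

namespace Ultragraph

variable {V E : Type} {U : Ultragraph V E} {A B : Set V}

theorem IsUltraset.nonempty (hA : U.IsUltraset A) : A.Nonempty :=
  Set.nonempty_iff_ne_empty.mpr fun h => hA.2.1.2.1 ⟨h ▸ hA.1, h.le⟩

-- Maximality of the principal filter of `A`, tested against the principal filter of `A ∩ B`.
theorem IsUltraset.subset_of_inter_nonempty (hA : U.IsUltraset A) (hB : U.IsG0 B)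
    (hAB : (A ∩ B).Nonempty) : A ⊆ B := by
  have hF : U.IsFilterG0 {C | U.IsG0 C ∧ A ∩ B ⊆ C} :=
    ⟨fun _ hC => hC.1, fun h => hAB.ne_empty (Set.subset_empty_iff.mp h.2),
      fun _ hC _ hD => ⟨hC.1.inter hD.1, Set.subset_inter hC.2 hD.2⟩,
      fun _ hC _ hD hCD => ⟨hD, hC.2.trans hCD⟩⟩
  have hle : U.principalFilter A ⊆ {C | U.IsG0 C ∧ A ∩ B ⊆ C} :=
    fun _ hC => ⟨hC.1, Set.inter_subset_left.trans hC.2⟩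
  have hBA : B ∈ U.principalFilter A := hA.2.2 _ hF hle ▸ ⟨hB, Set.inter_subset_right⟩
  exact hBA.2

theorem IsUltraset.eq_of_inter_nonempty (hA : U.IsUltraset A) (hB : U.IsUltraset B)
    (hAB : (A ∩ B).Nonempty) : A = B :=
  (hA.subset_of_inter_nonempty hB.1 hAB).antisymm
    (hB.subset_of_inter_nonempty hA.1 (Set.inter_comm A B ▸ hAB))

theorem IsUPath.tail {x : List E × Set V} (hx : U.IsUPath x) : U.IsUPath (x.1.tail, x.2) := by
  refine ⟨hx.1.tail, hx.2.1, fun e he => hx.2.2 e ?_⟩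
  obtain ⟨l, B⟩ := x
  rcases l with _ | ⟨f, _ | ⟨g, t⟩⟩
  · simp at he
  · simp at he
  · simpa using he

theorem isUPath_cons_iff {x : List E × Set V} (hx : U.IsUltraset x.2) (e : E) :
    U.IsUPath (e :: x.1, x.2) ↔ U.IsUPath x ∧ (U.r e ∩ U.srcSet x).Nonempty := by
  obtain ⟨l, B⟩ := x
  rcases l with _ | ⟨f, t⟩
  · have hB : U.IsUPath (([] : List E), B) := ⟨List.isChain_nil, hx.1, by simp⟩
    refine ⟨fun h => ⟨hB, hx.nonempty.mono fun v hv => ⟨h.2.2 e rfl hv, hv⟩⟩, fun h => ?_⟩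
    refine ⟨List.isChain_singleton e, hx.1, fun f hf => ?_⟩
    obtain rfl : e = f := by simpa using hf
    exact hx.subset_of_inter_nonempty (.range e) (Set.inter_comm _ _ ▸ h.2)
  · have hsrc : U.srcSet (f :: t, B) = {U.s f} := rfl
    rw [hsrc, Set.inter_singleton_nonempty]
    refine ⟨fun h => ⟨⟨(List.isChain_cons_cons.mp h.1).2, h.2⟩, (List.isChain_cons_cons.mp h.1).1⟩,
      fun h => ⟨List.isChain_cons_cons.mpr ⟨h.2, h.1.1⟩, h.1.2.1, fun g hg => ?_⟩⟩
    exact h.1.2.2 g (by simpa using hg)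

variable (U A) in
abbrev UPathsTo : Type := {z : List E × Set V // U.IsUPath z ∧ z.2 = A}

namespace UPathsTo

theorem ext_fst {z w : U.UPathsTo A} (h : z.1.1 = w.1.1) : z = w :=
  Subtype.ext (Prod.ext h (z.2.2.trans w.2.2.symm))

def ofList (l : List E) (hl : U.IsUPath (l, A)) : U.UPathsTo A := ⟨(l, A), hl, rfl⟩

theorem isUPath_fst (z : U.UPathsTo A) : U.IsUPath (z.1.1, A) := by
  obtain ⟨⟨l, B⟩, hz, rfl⟩ := z
  exact hz

theorem ofList_fst (z : U.UPathsTo A) : ofList z.1.1 z.isUPath_fst = z := ext_fst rfl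

def root (hA : U.IsG0 A) : U.UPathsTo A := ofList [] ⟨List.isChain_nil, hA, by simp⟩

theorem srcSet_root (hA : U.IsG0 A) : U.srcSet (root hA).1 = A := rfl

def cons (z : U.UPathsTo A) (hA : U.IsUltraset A) (e : E)
    (hne : (U.r e ∩ U.srcSet z.1).Nonempty) : U.UPathsTo A :=
  ⟨(e :: z.1.1, z.1.2), (isUPath_cons_iff (by rw [z.2.2]; exact hA) e).2 ⟨z.2.1, hne⟩, z.2.2⟩

def tail (z : U.UPathsTo A) : U.UPathsTo A := ⟨(z.1.1.tail, z.1.2), z.2.1.tail, z.2.2⟩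

end UPathsTo

open UPathsTo Finsupp

theorem sPath_cons {K : Type} [Field K] (e : E) (l : List E) :
    sPath K U (e :: l) = sGen K U e * sPath K U l := by
  simp [sPath]

theorem stPath_cons {K : Type} [Field K] (e : E) (l : List E) :
    stPath K U (e :: l) = stPath K U l * stGen K U e := by
  simp [stPath]

section Module

variable {K : Type} [Field K] [Module (LPA K U) (ModVx K U A)]

theorem VxHyps.smul_comm (h : VxHyps K U A) (c : K) (a : LPA K U) (m : ModVx K U A) :
    a • c • m = c • a • m := by
  have hc : ∀ n : ModVx K U A, (c • (1 : LPA K U)) • n = c • n := fun n => by rw [h.1, one_smul]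
  rw [← hc, ← mul_smul, mul_smul_comm, mul_one, h.1]

theorem VxHyps.smul_single (h : VxHyps K U A) (a : LPA K U) (z : U.UPathsTo A) (c : K) :
    a • single z c = c • a • single z (1 : K) := by
  rw [← h.smul_comm, smul_single_one]

theorem VxHyps.pGen_smul_single (h : VxHyps K U A) (hB : U.IsG0 B) {z : U.UPathsTo A}
    (hne : (B ∩ U.srcSet z.1).Nonempty) : pGen K U B hB • single z (1 : K) = single z 1 :=
  (h.2.1 B hB z).1 hne

theorem VxHyps.pGen_smul_single_eq_zero (h : VxHyps K U A) (hB : U.IsG0 B) {z : U.UPathsTo A}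
    (hne : ¬ (B ∩ U.srcSet z.1).Nonempty) : pGen K U B hB • single z (1 : K) = 0 :=
  (h.2.1 B hB z).2 hne

theorem VxHyps.sGen_smul_single (h : VxHyps K U A) (hA : U.IsUltraset A) {e : E}
    {z : U.UPathsTo A} (hne : (U.r e ∩ U.srcSet z.1).Nonempty) :
    sGen K U e • single z (1 : K) = single (z.cons hA e hne) 1 :=
  (h.2.2.1 e z).1 hne _ rfl

theorem VxHyps.stGen_smul_single (h : VxHyps K U A) {e : E} {l : List E} {z : U.UPathsTo A}
    (hz : z.1.1 = e :: l) : stGen K U e • single z (1 : K) = single z.tail 1 :=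
  (h.2.2.2 e z).1 l hz _ (by simp [UPathsTo.tail, hz])

theorem VxHyps.stGen_smul_single_eq_zero (h : VxHyps K U A) {e : E} {z : U.UPathsTo A}
    (hz : ∀ l, z.1.1 ≠ e :: l) : stGen K U e • single z (1 : K) = 0 :=
  (h.2.2.2 e z).2 hz

theorem VxHyps.stGen_smul_single_root (h : VxHyps K U A) (hA : U.IsG0 A) (e : E) :
    stGen K U e • single (root hA) (1 : K) = 0 :=
  h.stGen_smul_single_eq_zero fun l => (List.cons_ne_nil e l).symm

theorem VxHyps.sPath_smul_single_root (h : VxHyps K U A) (hA : U.IsUltraset A) (l : List E)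
    (hl : U.IsUPath (l, A)) :
    sPath K U l • single (root hA.1) (1 : K) = single (ofList l hl) 1 := by
  induction l with
  | nil => rw [show sPath K U [] = 1 from rfl, one_smul]; rfl
  | cons e t ih =>
    obtain ⟨ht, hne⟩ := (isUPath_cons_iff (x := (t, A)) hA e).1 hl
    rw [sPath_cons, mul_smul, ih ht, h.sGen_smul_single hA hne]
    rfl

theorem VxHyps.stPath_smul_single_of_eq_append (h : VxHyps K U A) {l : List E}
    {z z' : U.UPathsTo A} (hz : z.1.1 = l ++ z'.1.1) :
    stPath K U l • single z (1 : K) = single z' 1 := by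
  induction l generalizing z with
  | nil => rw [ext_fst hz]; simp [stPath]
  | cons e t ih =>
    rw [stPath_cons, mul_smul, h.stGen_smul_single hz, ih (by simp [UPathsTo.tail, hz])]

theorem VxHyps.stPath_smul_single_of_not_prefix (h : VxHyps K U A) {l : List E}
    {z : U.UPathsTo A} (hz : ¬ l <+: z.1.1) : stPath K U l • single z (1 : K) = 0 := by
  induction l generalizing z with
  | nil => exact absurd List.nil_prefix hz
  | cons e t ih =>
    rw [stPath_cons, mul_smul]
    rcases hzl : z.1.1 with _ | ⟨f, l₀⟩
    · rw [h.stGen_smul_single_eq_zero (by simp [hzl]), smul_zero]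
    · by_cases hfe : f = e
      · subst hfe
        rw [h.stGen_smul_single hzl, ih]
        simpa [UPathsTo.tail, hzl] using hz
      · rw [h.stGen_smul_single_eq_zero (by simp [hzl, hfe]), smul_zero]

theorem VxHyps.stPath_smul_eq_single_root (h : VxHyps K U A) (hA : U.IsG0 A)
    (m : ModVx K U A) (zm : U.UPathsTo A)
    (hmax : ∀ z ∈ m.support, z.1.1.length ≤ zm.1.1.length) :
    stPath K U zm.1.1 • m = single (root hA) (m zm) := by
  conv_lhs => rw [← m.sum_single]
  rw [Finsupp.sum, Finset.smul_sum, Finset.sum_eq_single zm]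
  · rw [h.smul_single, h.stPath_smul_single_of_eq_append (z' := root hA) (by simp [root, ofList]),
      smul_single_one]
  · intro z hz hne
    rw [h.smul_single, h.stPath_smul_single_of_not_prefix, smul_zero]
    exact fun hpre => hne (ext_fst (hpre.eq_of_length_le (hmax z hz))).symm
  · intro hzm
    rw [notMem_support_iff.mp hzm, single_zero, smul_zero]

theorem VxHyps.exists_smul_eq_single_root (h : VxHyps K U A) (hA : U.IsG0 A)
    {m : ModVx K U A} (hm : m ≠ 0) : ∃ a : LPA K U, a • m = single (root hA) 1 := by
  obtain ⟨zm, hzm, hmax⟩ :=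
    m.support.exists_max_image (fun z => z.1.1.length) (support_nonempty_iff.mpr hm)
  refine ⟨(m zm)⁻¹ • stPath K U zm.1.1, ?_⟩
  rw [h.1, h.stPath_smul_eq_single_root hA m zm hmax, Finsupp.smul_single, smul_eq_mul,
    inv_mul_cancel₀ (mem_support_iff.mp hzm)]

theorem VxHyps.exists_smul_single_root_eq (h : VxHyps K U A) (hA : U.IsUltraset A)
    (m : ModVx K U A) : ∃ a : LPA K U, a • single (root hA.1) 1 = m := by
  induction m using Finsupp.induction with
  | zero => exact ⟨0, zero_smul _ _⟩
  | single_add z c m _ _ ih =>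
    obtain ⟨a, rfl⟩ := ih
    refine ⟨c • sPath K U z.1.1 + a, ?_⟩
    rw [add_smul, h.1, h.sPath_smul_single_root hA _ (isUPath_fst z), ofList_fst, smul_single_one]

theorem VxHyps.eq_single_root_of_forall_stGen_smul_eq_zero (h : VxHyps K U A) (hA : U.IsG0 A)
    {m : ModVx K U A} (hm : ∀ e, stGen K U e • m = 0) :
    m = single (root hA) (m (root hA)) := by
  set m' := m - single (root hA) (m (root hA)) with hm'
  by_contra hne
  obtain ⟨zm, hzm, hmax⟩ := m'.support.exists_max_image (fun z => z.1.1.length)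
    (support_nonempty_iff.mpr (sub_ne_zero.mpr hne))
  have hzm_root : zm ≠ root hA := by
    rintro rfl
    simp [m'] at hzm
  obtain ⟨e, l, hel⟩ := List.exists_cons_of_ne_nil fun h0 => hzm_root (ext_fst h0)
  have hst : stGen K U e • m' = 0 := by
    rw [hm', smul_sub, hm e, h.smul_single, h.stGen_smul_single_root, smul_zero, sub_zero]
  have hroot := h.stPath_smul_eq_single_root hA m' zm hmax
  rw [hel, stPath_cons, mul_smul, hst, smul_zero, eq_comm, single_eq_zero] at hroot
  exact mem_support_iff.mp hzm hroot

theorem VxHyps.isSimpleModule (h : VxHyps K U A) (hA : U.IsUltraset A) :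
    IsSimpleModule (LPA K U) (ModVx K U A) := by
  refine isSimpleModule_iff_toSpanSingleton_surjective.mpr ⟨?_, fun m hm n => ?_⟩
  · exact ⟨single (root hA.1) 1, 0, by simp⟩
  · obtain ⟨a, ha⟩ := h.exists_smul_eq_single_root hA.1 hm
    obtain ⟨b, rfl⟩ := h.exists_smul_single_root_eq hA n
    exact ⟨b * a, by rw [LinearMap.toSpanSingleton_apply, mul_smul, ha]⟩

theorem VxHyps.existsUnique_linearMap_eq_smul (h : VxHyps K U A) (hA : U.IsUltraset A)
    (f : ModVx K U A →ₗ[LPA K U] ModVx K U A) : ∃! k : K, ∀ m, f m = k • m := by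
  set r : ModVx K U A := single (root hA.1) 1
  obtain ⟨c, hc⟩ : ∃ c : K, f r = c • r :=
    ⟨_, (h.eq_single_root_of_forall_stGen_smul_eq_zero hA.1 fun e => by
      rw [← map_smul, h.stGen_smul_single_root, map_zero]).trans (smul_single_one _ _).symm⟩
  refine ⟨c, fun m => ?_, fun k hk => ?_⟩
  · obtain ⟨a, rfl⟩ := h.exists_smul_single_root_eq hA m
    rw [map_smul, hc, h.smul_comm]
  · exact smul_left_injective K (single_ne_zero.mpr one_ne_zero) ((hk r).symm.trans hc)

end Module

theorem VxHyps.eq_of_linearEquiv {K : Type} [Field K] [Module (LPA K U) (ModVx K U A)]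
    [Module (LPA K U) (ModVx K U B)] (hA : U.IsUltraset A) (hB : U.IsUltraset B)
    (h₁ : VxHyps K U A) (h₂ : VxHyps K U B) (g : ModVx K U A ≃ₗ[LPA K U] ModVx K U B) :
    A = B := by
  set w := g (single (root hA.1) 1)
  have hw : w = single (root hB.1) (w (root hB.1)) :=
    h₂.eq_single_root_of_forall_stGen_smul_eq_zero hB.1 fun e => by
      rw [← map_smul, h₁.stGen_smul_single_root, map_zero]
  have hw0 : w (root hB.1) ≠ 0 := fun h0 => by
    rw [h0, single_zero, g.map_eq_zero_iff] at hw
    exact one_ne_zero (single_eq_zero.mp hw)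
  refine hA.eq_of_inter_nonempty hB (not_not.mp fun hAB => hw0 ?_)
  have hpA : pGen K U A hA.1 • w = w := by
    rw [← map_smul, h₁.pGen_smul_single hA.1 (by simpa [srcSet_root] using hA.nonempty)]
  rw [hw, h₂.smul_single, h₂.pGen_smul_single_eq_zero hA.1 (by rwa [srcSet_root]), smul_zero,
    eq_comm, single_eq_zero] at hpA
  exact hpA

def VxHyps.action {K : Type} [Field K] [inst : Module (LPA K U) (ModVx K U A)]
    (h : VxHyps K U A) : LPA K U →ₐ[K] Module.End K (ModVx K U A) :=
  letI : IsScalarTower K (LPA K U) (ModVx K U A) := ⟨h.1⟩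
  letI : SMulCommClass (LPA K U) K (ModVx K U A) := ⟨fun a c m => h.smul_comm c a m⟩
  Algebra.lsmul K K (ModVx K U A)

theorem VxHyps.module_eq {K : Type} [Field K] (hA : U.IsUltraset A)
    (i₁ i₂ : Module (LPA K U) (ModVx K U A))
    (h₁ : @VxHyps V E K _ U A i₁) (h₂ : @VxHyps V E K _ U A i₂) : i₁ = i₂ := by
  have key : action (inst := i₁) h₁ = action (inst := i₂) h₂ := by
    ext g z : 5
    rcases g with ⟨B, hB⟩ | e | e
    · by_cases hne : (B ∩ U.srcSet z.1).Nonempty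
      · exact ((h₁.2.1 B hB z).1 hne).trans ((h₂.2.1 B hB z).1 hne).symm
      · exact ((h₁.2.1 B hB z).2 hne).trans ((h₂.2.1 B hB z).2 hne).symm
    · by_cases hne : (U.r e ∩ U.srcSet z.1).Nonempty
      · exact ((h₁.2.2.1 e z).1 hne _ rfl).trans
          ((h₂.2.2.1 e z).1 hne (UPathsTo.cons z hA e hne) rfl).symm
      · exact ((h₁.2.2.1 e z).2 hne).trans ((h₂.2.2.1 e z).2 hne).symm
    · by_cases hz : ∃ l, z.1.1 = e :: l
      · obtain ⟨l, hl⟩ := hz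
        have htail : (UPathsTo.tail z).1 = (l, z.1.2) := by simp [UPathsTo.tail, hl]
        exact ((h₁.2.2.2 e z).1 l hl _ htail).trans ((h₂.2.2.2 e z).1 l hl _ htail).symm
      · have hz' : ∀ l, z.1.1 ≠ e :: l := fun l hl => hz ⟨l, hl⟩
        exact ((h₁.2.2.2 e z).2 hz').trans ((h₂.2.2.2 e z).2 hz').symm
  exact Module.ext' i₁ i₂ fun a m => LinearMap.congr_fun (AlgHom.congr_fun key a) m

theorem VxHyps.nonempty_linearEquiv_of_eq {K : Type} [Field K]
    [iA : Module (LPA K U) (ModVx K U A)] [iB : Module (LPA K U) (ModVx K U B)]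
    (hA : U.IsUltraset A) (h₁ : VxHyps K U A) (h₂ : VxHyps K U B) (hAB : A = B) :
    Nonempty (ModVx K U A ≃ₗ[LPA K U] ModVx K U B) := by
  subst hAB
  obtain rfl : iA = iB := module_eq hA iA iB h₁ h₂
  exact ⟨LinearEquiv.refl _ _⟩

theorem eq_of_setOf_isUPath_snd_eq (hA : U.IsG0 A)
    (h : {z : List E × Set V | U.IsUPath z ∧ z.2 = A} = {z | U.IsUPath z ∧ z.2 = B}) : A = B :=
  (h ▸ (root hA).2 : (root hA).1 ∈ {z : List E × Set V | U.IsUPath z ∧ z.2 = B}).2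

end Ultragraph

open Ultragraph in
theorem ultragraph_leavitt_Vx_simple_general
    (K : Type) [Field K] (V E : Type)
    (U : Ultragraph V E)
    (x y : List E × Set V)
    (hx : U.IsUPath x ∧ U.IsUltraset x.2 ∧ U.InfEmitterSet x.2)
    (hy : U.IsUPath y ∧ U.IsUltraset y.2 ∧ U.InfEmitterSet y.2)
    [instx : Module (LPA K U) (ModVx K U x.2)]
    [insty : Module (LPA K U) (ModVx K U y.2)]
    (hVx : VxHyps K U x.2) (hVy : VxHyps K U y.2) :
    IsSimpleModule (LPA K U) (ModVx K U x.2) ∧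
    (Nonempty (ModVx K U x.2 ≃ₗ[LPA K U] ModVx K U y.2) ↔ x.2 = y.2) ∧
    (x.2 = y.2 ↔
      {z : List E × Set V | U.IsUPath z ∧ z.2 = x.2} =
        {z : List E × Set V | U.IsUPath z ∧ z.2 = y.2}) ∧
    (∀ f : ModVx K U x.2 →ₗ[LPA K U] ModVx K U x.2,
      ∃! k : K, ∀ m : ModVx K U x.2, f m = k • m) :=
  ⟨hVx.isSimpleModule hx.2.1,
    ⟨fun ⟨g⟩ => VxHyps.eq_of_linearEquiv hx.2.1 hy.2.1 hVx hVy g,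
      VxHyps.nonempty_linearEquiv_of_eq hx.2.1 hVx hVy⟩,
    ⟨fun h => h ▸ rfl, eq_of_setOf_isUPath_snd_eq hx.2.1.1⟩,
    hVx.existsUnique_linearMap_eq_smul hx.2.1⟩

open Ultragraph in
/-- For `x, y ∈ Y_∞`, the module `V_x` (with basis
`{z ∈ 𝔭 : r(z) = r(x)}` and the prescribed action) is simple, `V_x ≅ V_y` iff
`r(x) = r(y)` (equivalently the two bases coincide), and `End(V_x) ≅ K`. -/
theorem ultragraph_leavitt_Vx_simple
    (K : Type) [Field K] (V E : Type) [Countable V] [Countable E]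
    (U : Ultragraph V E) (hns : U.HasNoSinks)
    (x y : List E × Set V)
    (hx : U.IsUPath x ∧ U.IsUltraset x.2 ∧ U.InfEmitterSet x.2)
    (hy : U.IsUPath y ∧ U.IsUltraset y.2 ∧ U.InfEmitterSet y.2)
    [instx : Module (LPA K U) (ModVx K U x.2)]
    [insty : Module (LPA K U) (ModVx K U y.2)]
    (hVx : VxHyps K U x.2) (hVy : VxHyps K U y.2) :
    IsSimpleModule (LPA K U) (ModVx K U x.2) ∧
    (Nonempty (ModVx K U x.2 ≃ₗ[LPA K U] ModVx K U y.2) ↔ x.2 = y.2) ∧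
    (x.2 = y.2 ↔
      {z : List E × Set V | U.IsUPath z ∧ z.2 = x.2} =
        {z : List E × Set V | U.IsUPath z ∧ z.2 = y.2}) ∧
    (∀ f : ModVx K U x.2 →ₗ[LPA K U] ModVx K U x.2,
      ∃! k : K, ∀ m : ModVx K U x.2, f m = k • m) :=
  ultragraph_leavitt_Vx_simple_general K V E U x y hx hy (instx := instx) (insty := insty) hVx hVy
end
end
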